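/- Let b_1, ..., b_m be unit vectors in ℝ³, k_R, k_1, ..., k_m > 0, M := Σ_j k_j b_j b_jᵀ. Let R̃_j : [0, ∞) → SO(3) be continuous and let R̃ : [0, ∞) → SO(3) be a differentiable solution of R̃'(t) = −2 k_R R̃(t)[ψ(M R̃(t))]^× + k_R R̃(t)[Σ_j k_j g_j(t)]^×, where g_j(t) := (R̃_j(t)ᵀ − I₃) b_j × R̃(t)ᵀ b_j. Then for all t ≥ 0, (d/dt)|R̃(t)|_I² = −k_R ψ(R̃(t))ᵀ ( ψ(M R̃(t)) − (1/2) Σ_j k_j g_j(t) ). -/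

import Mathlib

open Matrix Real Filter

noncomputable section

/-- 3×3 real matrices. -/
abbrev M3 := Matrix (Fin 3) (Fin 3) ℝ
/-- Vectors in ℝ³. -/
abbrev V3 := Fin 3 → ℝ

/-- The special orthogonal group SO(3). -/
def SO3 (R : M3) : Prop := Rᵀ * R = 1 ∧ R.det = 1

/-- The skew-symmetric matrix [x]^× with [x]^× y = x × y. -/
def skew (x : V3) : M3 := !![0, -x 2, x 1; x 2, 0, -x 0; -x 1, x 0, 0]

/-- ψ(C) = vex(𝒫ₐ(C)) = (1/2)[c₃₂ − c₂₃, c₁₃ − c₃₁, c₂₁ − c₁₂]ᵀ. -/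
def psi (C : M3) : V3 := ![(C 2 1 - C 1 2)/2, (C 0 2 - C 2 0)/2, (C 1 0 - C 0 1)/2]

/-- Euclidean norm on ℝ³. -/
def norm3 (x : V3) : ℝ := Real.sqrt (x ⬝ᵥ x)

/-- Frobenius norm on 3×3 matrices. -/
def frob (A : M3) : ℝ := Real.sqrt ((Aᵀ * A).trace)

/-- Normalized Euclidean distance |R|_I = √((1/4) tr(I₃ − R)) on SO(3). -/
def nI (R : M3) : ℝ := Real.sqrt ((1 - R).trace / 4)

/-- Orthogonal projection matrix P_x = I₃ − x xᵀ/‖x‖². -/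
def proj (x : V3) : M3 := 1 - (x ⬝ᵥ x)⁻¹ • vecMulVec x x

/-- Entrywise derivative of a matrix-valued function. -/
def HasMatDerivAt (X : ℝ → M3) (X' : M3) (t : ℝ) : Prop :=
  ∀ i j, HasDerivAt (fun s => X s i j) (X' i j) t

/-- Entrywise derivative of a vector-valued function. -/
def HasVecDerivAt (x : ℝ → V3) (x' : V3) (t : ℝ) : Prop :=
  ∀ i, HasDerivAt (fun s => x s i) (x' i) t

/-! |R|_I² = (3 − tr R)/4 is affine in R, so its derivative is −tr(R̃')/4; the identity
tr(A [v]^×) = −2 ψ(A)ᵀ v, valid for every matrix A, turns the trace of each term of the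
dynamics into the stated inner product. -/

theorem trace_mul_skew (A : M3) (v : V3) : (A * skew v).trace = -2 * (psi A ⬝ᵥ v) := by
  simp only [trace, skew, diag_apply, mul_apply, of_apply, cons_val', cons_val_fin_one,
    Fin.sum_univ_three, cons_val_zero, cons_val_one, cons_val, dotProduct, psi]
  ring

theorem HasMatDerivAt.trace {X : ℝ → M3} {X' : M3} {t : ℝ} (h : HasMatDerivAt X X' t) :
    HasDerivAt (fun s => (X s).trace) X'.trace t :=
  HasDerivAt.fun_sum fun i _ => h i i

theorem forced_attitude_derivative_general (m : ℕ)
    (kR : ℝ) (k : Fin m → ℝ)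
    (M : M3)
    (Rtil : ℝ → M3)
    (g : Fin m → ℝ → V3)
    (hdyn : ∀ t, 0 ≤ t → HasMatDerivAt Rtil
      ((-(2 * kR)) • (Rtil t * skew (psi (M * Rtil t))) +
        kR • (Rtil t * skew (∑ j, k j • g j t))) t) :
    ∀ t, 0 ≤ t →
      HasDerivAt (fun s => (1 - Rtil s).trace / 4)
        (-kR * (psi (Rtil t) ⬝ᵥ (psi (M * Rtil t) - (1/2 : ℝ) • ∑ j, k j • g j t))) t := by
  intro t ht
  have h := ((hdyn t ht).trace.const_sub (trace (1 : M3))).div_const 4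
  simp only [← trace_sub] at h
  refine h.congr_deriv ?_
  rw [trace_add, trace_smul, trace_smul, trace_mul_skew, trace_mul_skew, dotProduct_sub,
    dotProduct_smul, smul_eq_mul]
  ring

/-- exact expression for the derivative of |R̃(t)|_I² along the forced
    attitude error dynamics:
    (d/dt)|R̃(t)|_I² = −k_R ψ(R̃(t))ᵀ (ψ(M R̃(t)) − (1/2) Σ_j k_j g_j(t)). -/
theorem forced_attitude_derivative (m : ℕ) (b : Fin m → V3)
    (kR : ℝ) (k : Fin m → ℝ)
    (hb : ∀ j, b j ⬝ᵥ b j = 1) (hkR : 0 < kR) (hk : ∀ j, 0 < k j)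
    (M : M3) (hM : M = ∑ j, k j • vecMulVec (b j) (b j))
    (Rj : Fin m → ℝ → M3) (hRjcont : ∀ j i i', Continuous (fun t => Rj j t i i'))
    (hRjSO3 : ∀ j t, 0 ≤ t → SO3 (Rj j t))
    (Rtil : ℝ → M3) (hSO3 : ∀ t, 0 ≤ t → SO3 (Rtil t))
    (g : Fin m → ℝ → V3)
    (hg : ∀ j t, g j t = crossProduct (((Rj j t)ᵀ - 1) *ᵥ b j) ((Rtil t)ᵀ *ᵥ b j))
    (hdyn : ∀ t, 0 ≤ t → HasMatDerivAt Rtil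
      ((-(2 * kR)) • (Rtil t * skew (psi (M * Rtil t))) +
        kR • (Rtil t * skew (∑ j, k j • g j t))) t) :
    ∀ t, 0 ≤ t →
      HasDerivAt (fun s => (1 - Rtil s).trace / 4)
        (-kR * (psi (Rtil t) ⬝ᵥ (psi (M * Rtil t) - (1/2 : ℝ) • ∑ j, k j • g j t))) t :=
  forced_attitude_derivative_general m kR k M Rtil g hdyn
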